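/- Let G be a group, H a finite subgroup of G, and k a commutative unital ring in which the order |H| of H is invertible. Let V be a module over the group algebra k[H] which is flat as a k-module. Then the induced module Ind_H^G(V) is flat as a module over the group algebra k[G]. -/

import Mathlib

/-!
STATEMENT 9: Let G be a group, H a finite subgroup of G, and k a commutative unital ring
in which |H| is invertible.  Let V be a k[H]-module which is flat as a k-module.  Then
the induced module Ind_H^G(V) = k[G] ⊗_{k[H]} V is flat as a k[G]-module, where flatness
of a module W over a (possibly noncommutative) k-algebra A means that N ↦ N ⊗_A W, from
right A-modules to k-modules, preserves exact sequences.
-/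

universe u v w w₁

section BalancedTensor

variable (k : Type u) [CommRing k] (A : Type v) [Ring A] [Algebra k A]

/-- The submodule of `M ⊗[k] V` of relations defining the balanced tensor product
`M ⊗[A] V` of a right `A`-module `M` and a left `A`-module `V`. -/
def balancedRel (M V : Type*) [AddCommGroup M] [Module k M] [Module Aᵐᵒᵖ M]
    [IsScalarTower k Aᵐᵒᵖ M] [AddCommGroup V] [Module k V] [Module A V]
    [IsScalarTower k A V] : Submodule k (TensorProduct k M V) :=
  Submodule.span k {x | ∃ (a : A) (m : M) (v : V),
    x = (MulOpposite.op a • m) ⊗ₜ[k] v - m ⊗ₜ[k] (a • v)}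

/-- The balanced tensor product `M ⊗[A] V` of a right `A`-module `M` and a left
`A`-module `V`, as a `k`-module. -/
def BalancedTensor (M V : Type*) [AddCommGroup M] [Module k M] [Module Aᵐᵒᵖ M]
    [IsScalarTower k Aᵐᵒᵖ M] [AddCommGroup V] [Module k V] [Module A V]
    [IsScalarTower k A V] : Type _ :=
  TensorProduct k M V ⧸ balancedRel k A M V

noncomputable instance (M V : Type*) [AddCommGroup M] [Module k M] [Module Aᵐᵒᵖ M]
    [IsScalarTower k Aᵐᵒᵖ M] [AddCommGroup V] [Module k V] [Module A V]
    [IsScalarTower k A V] : AddCommGroup (BalancedTensor k A M V) :=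
  inferInstanceAs (AddCommGroup (TensorProduct k M V ⧸ balancedRel k A M V))

noncomputable instance (M V : Type*) [AddCommGroup M] [Module k M] [Module Aᵐᵒᵖ M]
    [IsScalarTower k Aᵐᵒᵖ M] [AddCommGroup V] [Module k V] [Module A V]
    [IsScalarTower k A V] : Module k (BalancedTensor k A M V) :=
  inferInstanceAs (Module k (TensorProduct k M V ⧸ balancedRel k A M V))

/-- The map `M ⊗[A] V → M' ⊗[A] V` induced by a map `f : M → M'` of right `A`-modules. -/
noncomputable def balancedMap {M M' : Type*} (V : Type*) [AddCommGroup M] [Module k M]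
    [Module Aᵐᵒᵖ M] [IsScalarTower k Aᵐᵒᵖ M] [AddCommGroup M'] [Module k M']
    [Module Aᵐᵒᵖ M'] [IsScalarTower k Aᵐᵒᵖ M'] [AddCommGroup V] [Module k V]
    [Module A V] [IsScalarTower k A V] (f : M →ₗ[Aᵐᵒᵖ] M') :
    BalancedTensor k A M V →ₗ[k] BalancedTensor k A M' V :=
  Submodule.mapQ (balancedRel k A M V) (balancedRel k A M' V)
    (LinearMap.rTensor V (f.restrictScalars k))
    (by
      unfold balancedRel
      rw [Submodule.span_le]
      rintro x ⟨a, m, v, rfl⟩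
      rw [SetLike.mem_coe, Submodule.mem_comap, map_sub, LinearMap.rTensor_tmul,
        LinearMap.rTensor_tmul, LinearMap.coe_restrictScalars, map_smul]
      exact Submodule.subset_span ⟨a, f m, v, rfl⟩)

/-- A left `A`-module `V` is flat over `A` if the functor `M ↦ M ⊗[A] V` from right
`A`-modules to `k`-modules preserves exact sequences. -/
def IsFlatOver (V : Type*) [AddCommGroup V] [Module k V] [Module A V]
    [IsScalarTower k A V] : Prop :=
  ∀ (M₁ M₂ M₃ : Type w) (_ : AddCommGroup M₁) (_ : Module k M₁) (_ : Module Aᵐᵒᵖ M₁)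
    (_ : IsScalarTower k Aᵐᵒᵖ M₁) (_ : AddCommGroup M₂) (_ : Module k M₂)
    (_ : Module Aᵐᵒᵖ M₂) (_ : IsScalarTower k Aᵐᵒᵖ M₂) (_ : AddCommGroup M₃)
    (_ : Module k M₃) (_ : Module Aᵐᵒᵖ M₃) (_ : IsScalarTower k Aᵐᵒᵖ M₃)
    (f : M₁ →ₗ[Aᵐᵒᵖ] M₂) (g : M₂ →ₗ[Aᵐᵒᵖ] M₃),
    Function.Exact f g → Function.Exact (balancedMap k A V f) (balancedMap k A V g)

end BalancedTensor

section Induced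

variable (k : Type u) [CommRing k] (G : Type v) [Group G] (H : Subgroup G)
variable (M : Type u) [AddCommGroup M] [Module k M]
  [Module (MonoidAlgebra k ↥H) M] [IsScalarTower k (MonoidAlgebra k ↥H) M]

/-- The relations defining `k[G] ⊗_{k[H]} M` inside `k[G] ⊗_k M`, as a
`k[G]`-submodule. -/
noncomputable def indRel : Submodule (MonoidAlgebra k G) (TensorProduct k (MonoidAlgebra k G) M) :=
  Submodule.span (MonoidAlgebra k G)
    {x | ∃ (a : MonoidAlgebra k ↥H) (y : MonoidAlgebra k G) (m : M),
      x = (y * MonoidAlgebra.mapDomainRingHom k H.subtype a) ⊗ₜ[k] m - y ⊗ₜ[k] (a • m)}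

/-- The induced module `Ind_H^G M = k[G] ⊗_{k[H]} M`. -/
def IndModule : Type _ :=
  TensorProduct k (MonoidAlgebra k G) M ⧸ indRel k G H M

noncomputable instance : AddCommGroup (IndModule k G H M) :=
  inferInstanceAs
    (AddCommGroup (TensorProduct k (MonoidAlgebra k G) M ⧸ indRel k G H M))

noncomputable instance : Module (MonoidAlgebra k G) (IndModule k G H M) :=
  inferInstanceAs
    (Module (MonoidAlgebra k G) (TensorProduct k (MonoidAlgebra k G) M ⧸ indRel k G H M))

noncomputable instance : Module k (IndModule k G H M) :=
  inferInstanceAs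
    (Module k (TensorProduct k (MonoidAlgebra k G) M ⧸ indRel k G H M))

noncomputable instance : IsScalarTower k (MonoidAlgebra k G) (IndModule k G H M) :=
  inferInstanceAs
    (IsScalarTower k (MonoidAlgebra k G)
      (TensorProduct k (MonoidAlgebra k G) M ⧸ indRel k G H M))

end Induced


/-! ### Auxiliary machinery -/

section FlatAuxGeneral

variable (k : Type u) [CommRing k] (A : Type v) [Ring A] [Algebra k A]

variable {W : Type w₁} {W' : Type*}
  [AddCommGroup W] [Module k W] [Module A W] [IsScalarTower k A W]
  [AddCommGroup W'] [Module k W'] [Module A W'] [IsScalarTower k A W']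

/-- The map `M ⊗[A] W → M ⊗[A] W'` induced by an `A`-linear map `W → W'`. -/
noncomputable def coMap (M : Type*) [AddCommGroup M] [Module k M] [Module Aᵐᵒᵖ M]
    [IsScalarTower k Aᵐᵒᵖ M] (φ : W →ₗ[A] W') :
    BalancedTensor k A M W →ₗ[k] BalancedTensor k A M W' :=
  Submodule.mapQ (balancedRel k A M W) (balancedRel k A M W')
    (LinearMap.lTensor M (φ.restrictScalars k)) (by
      unfold balancedRel
      rw [Submodule.span_le]
      rintro x ⟨a, m, v, rfl⟩
      simp only [SetLike.mem_coe, Submodule.mem_comap, map_sub, LinearMap.lTensor_tmul,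
        LinearMap.coe_restrictScalars, map_smul]
      exact Submodule.subset_span ⟨a, m, φ v, rfl⟩)

lemma coMap_mk {M : Type*} [AddCommGroup M] [Module k M] [Module Aᵐᵒᵖ M]
    [IsScalarTower k Aᵐᵒᵖ M] (φ : W →ₗ[A] W') (x : TensorProduct k M W) :
    coMap k A M φ (Submodule.Quotient.mk x) =
      Submodule.Quotient.mk (LinearMap.lTensor M (φ.restrictScalars k) x) :=
  rfl

lemma balancedMap_mk {M M' : Type*} [AddCommGroup M] [Module k M] [Module Aᵐᵒᵖ M]
    [IsScalarTower k Aᵐᵒᵖ M] [AddCommGroup M'] [Module k M'] [Module Aᵐᵒᵖ M']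
    [IsScalarTower k Aᵐᵒᵖ M'] (f : M →ₗ[Aᵐᵒᵖ] M') (x : TensorProduct k M W) :
    balancedMap k A W f (Submodule.Quotient.mk x) =
      Submodule.Quotient.mk (LinearMap.rTensor W (f.restrictScalars k) x) :=
  rfl

lemma coMap_balancedMap {M M' : Type*} [AddCommGroup M] [Module k M] [Module Aᵐᵒᵖ M]
    [IsScalarTower k Aᵐᵒᵖ M] [AddCommGroup M'] [Module k M'] [Module Aᵐᵒᵖ M']
    [IsScalarTower k Aᵐᵒᵖ M'] (f : M →ₗ[Aᵐᵒᵖ] M') (φ : W →ₗ[A] W')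
    (x : BalancedTensor k A M W) :
    coMap k A M' φ (balancedMap k A W f x) = balancedMap k A W' f (coMap k A M φ x) := by
  obtain ⟨y, rfl⟩ := Submodule.Quotient.mk_surjective _ x
  rw [balancedMap_mk, coMap_mk, coMap_mk, balancedMap_mk]
  congr 1
  rw [← LinearMap.comp_apply, ← LinearMap.comp_apply, LinearMap.lTensor_comp_rTensor,
    LinearMap.rTensor_comp_lTensor]

lemma coMap_coMap {M : Type*} [AddCommGroup M] [Module k M] [Module Aᵐᵒᵖ M]
    [IsScalarTower k Aᵐᵒᵖ M] (i : W →ₗ[A] W') (p : W' →ₗ[A] W)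
    (hpi : ∀ x, p (i x) = x) (x : BalancedTensor k A M W) :
    coMap k A M p (coMap k A M i x) = x := by
  obtain ⟨y, rfl⟩ := Submodule.Quotient.mk_surjective _ x
  rw [coMap_mk, coMap_mk]
  congr 1
  rw [← LinearMap.comp_apply, ← LinearMap.lTensor_comp]
  have : (p.restrictScalars k) ∘ₗ (i.restrictScalars k) = LinearMap.id := by
    ext w; exact hpi w
  rw [this, LinearMap.lTensor_id, LinearMap.id_apply]

/-- Flatness passes to retracts. -/
lemma isFlatOver_of_retract (i : W →ₗ[A] W') (p : W' →ₗ[A] W)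
    (hpi : ∀ x, p (i x) = x) (hW' : IsFlatOver.{u, v, w} k A W') :
    IsFlatOver.{u, v, w} k A W := by
  intro M₁ M₂ M₃ i1 i2 i3 i4 i5 i6 i7 i8 i9 i10 i11 i12 f g hfg
  have hex := hW' M₁ M₂ M₃ i1 i2 i3 i4 i5 i6 i7 i8 i9 i10 i11 i12 f g hfg
  intro x
  constructor
  · intro hx
    have h1 : balancedMap k A W' g (coMap k A M₂ i x) = 0 := by
      rw [← coMap_balancedMap, hx, map_zero]
    obtain ⟨y, hy⟩ := (hex _).mp h1
    refine ⟨coMap k A M₁ p y, ?_⟩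
    calc balancedMap k A W f (coMap k A M₁ p y)
        = coMap k A M₂ p (balancedMap k A W' f y) := (coMap_balancedMap k A f p y).symm
      _ = coMap k A M₂ p (coMap k A M₂ i x) := by rw [hy]
      _ = x := coMap_coMap k A i p hpi x
  · rintro ⟨y, rfl⟩
    have h0 : balancedMap k A W' g (balancedMap k A W' f (coMap k A M₁ i y)) = 0 :=
      (hex _).mpr ⟨coMap k A M₁ i y, rfl⟩
    have h1 : coMap k A M₃ i (balancedMap k A W g (balancedMap k A W f y)) = 0 := by
      rw [coMap_balancedMap, coMap_balancedMap]; exact h0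
    calc balancedMap k A W g (balancedMap k A W f y)
        = coMap k A M₃ p (coMap k A M₃ i
            (balancedMap k A W g (balancedMap k A W f y))) :=
          (coMap_coMap k A i p hpi _).symm
      _ = 0 := by rw [h1, map_zero]

end FlatAuxGeneral

section TensorFlat

variable (k : Type u) [CommRing k] (A : Type v) [Ring A] [Algebra k A]
variable (V : Type w₁) [AddCommGroup V] [Module k V]

/-- The right action map `M ⊗[k] A → M`. -/
noncomputable def actM (M : Type*) [AddCommGroup M] [Module k M] [Module Aᵐᵒᵖ M]
    [IsScalarTower k Aᵐᵒᵖ M] : TensorProduct k M A →ₗ[k] M :=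
  TensorProduct.lift (LinearMap.mk₂ k (fun m a => MulOpposite.op a • m)
    (fun m m' a => smul_add _ _ _)
    (fun c m a => (smul_comm c (MulOpposite.op a) m).symm)
    (fun m a a' => by simp [add_smul])
    (fun c m a => by simp [MulOpposite.op_smul, smul_assoc]))

/-- The map `M ⊗[k] (A ⊗[k] V) → M ⊗[k] V`, `m ⊗ a ⊗ v ↦ (m·a) ⊗ v`. -/
noncomputable def fwd0 (M : Type*) [AddCommGroup M] [Module k M] [Module Aᵐᵒᵖ M]
    [IsScalarTower k Aᵐᵒᵖ M] :
    TensorProduct k M (TensorProduct k A V) →ₗ[k] TensorProduct k M V :=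
  (LinearMap.rTensor V (actM k A M)) ∘ₗ (TensorProduct.assoc k M A V).symm.toLinearMap

lemma fwd0_tmul {M : Type*} [AddCommGroup M] [Module k M] [Module Aᵐᵒᵖ M]
    [IsScalarTower k Aᵐᵒᵖ M] (m : M) (a : A) (v : V) :
    fwd0 k A V M (m ⊗ₜ[k] (a ⊗ₜ[k] v)) = (MulOpposite.op a • m) ⊗ₜ[k] v := by
  simp [fwd0, actM]

lemma fwd0_rel {M : Type*} [AddCommGroup M] [Module k M] [Module Aᵐᵒᵖ M]
    [IsScalarTower k Aᵐᵒᵖ M] :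
    balancedRel k A M (TensorProduct k A V) ≤ LinearMap.ker (fwd0 k A V M) := by
  unfold balancedRel
  rw [Submodule.span_le]
  rintro x ⟨a, m, w, rfl⟩
  rw [SetLike.mem_coe, LinearMap.mem_ker, map_sub, sub_eq_zero]
  induction w using TensorProduct.induction_on with
  | zero => simp
  | tmul b v =>
      rw [TensorProduct.smul_tmul', smul_eq_mul, fwd0_tmul, fwd0_tmul,
        MulOpposite.op_mul, mul_smul]
  | add w₁ w₂ h₁ h₂ =>
      rw [TensorProduct.tmul_add, smul_add, TensorProduct.tmul_add, map_add, map_add,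
        h₁, h₂]

/-- The induced map `M ⊗[A] (A ⊗[k] V) → M ⊗[k] V`. -/
noncomputable def phiFwd (M : Type*) [AddCommGroup M] [Module k M] [Module Aᵐᵒᵖ M]
    [IsScalarTower k Aᵐᵒᵖ M] :
    BalancedTensor k A M (TensorProduct k A V) →ₗ[k] TensorProduct k M V :=
  Submodule.liftQ _ (fwd0 k A V M) (fwd0_rel k A V)

/-- The inverse map `M ⊗[k] V → M ⊗[A] (A ⊗[k] V)`. -/
noncomputable def phiBwd (M : Type*) [AddCommGroup M] [Module k M] [Module Aᵐᵒᵖ M]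
    [IsScalarTower k Aᵐᵒᵖ M] :
    TensorProduct k M V →ₗ[k] BalancedTensor k A M (TensorProduct k A V) :=
  (Submodule.mkQ _) ∘ₗ LinearMap.lTensor M (TensorProduct.mk k A V 1)

lemma phiFwd_mk {M : Type*} [AddCommGroup M] [Module k M] [Module Aᵐᵒᵖ M]
    [IsScalarTower k Aᵐᵒᵖ M] (x : TensorProduct k M (TensorProduct k A V)) :
    phiFwd k A V M (Submodule.Quotient.mk x) = fwd0 k A V M x :=
  Submodule.liftQ_apply _ _ x

lemma phiBwd_fwd0 {M : Type*} [AddCommGroup M] [Module k M] [Module Aᵐᵒᵖ M]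
    [IsScalarTower k Aᵐᵒᵖ M] (y : TensorProduct k M (TensorProduct k A V)) :
    phiBwd k A V M (fwd0 k A V M y) = Submodule.Quotient.mk y := by
  induction y using TensorProduct.induction_on with
  | zero => simp; rfl
  | add y₁ y₂ h₁ h₂ =>
      rw [map_add, map_add, h₁, h₂, Submodule.Quotient.mk_add]; rfl
  | tmul m w =>
      induction w using TensorProduct.induction_on with
      | zero => simp [phiBwd]; rfl
      | add w₁ w₂ h₁ h₂ =>
          rw [TensorProduct.tmul_add, map_add, map_add, h₁, h₂]
          exact (Submodule.Quotient.mk_add _).symm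
      | tmul a v =>
          rw [fwd0_tmul]
          show Submodule.Quotient.mk
            ((MulOpposite.op a • m) ⊗ₜ[k] ((1 : A) ⊗ₜ[k] v)) = _
          rw [Submodule.Quotient.eq]
          have ha : a • ((1 : A) ⊗ₜ[k] v) = a ⊗ₜ[k] v := by
            rw [TensorProduct.smul_tmul', smul_eq_mul, mul_one]
          refine Submodule.subset_span ⟨a, m, (1 : A) ⊗ₜ[k] v, ?_⟩
          rw [ha]

lemma phiBwd_phiFwd {M : Type*} [AddCommGroup M] [Module k M] [Module Aᵐᵒᵖ M]
    [IsScalarTower k Aᵐᵒᵖ M] (x : BalancedTensor k A M (TensorProduct k A V)) :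
    phiBwd k A V M (phiFwd k A V M x) = x := by
  obtain ⟨y, rfl⟩ := Submodule.Quotient.mk_surjective _ x
  rw [phiFwd_mk, phiBwd_fwd0]

lemma fwd0_nat {M M' : Type*} [AddCommGroup M] [Module k M] [Module Aᵐᵒᵖ M]
    [IsScalarTower k Aᵐᵒᵖ M] [AddCommGroup M'] [Module k M'] [Module Aᵐᵒᵖ M']
    [IsScalarTower k Aᵐᵒᵖ M'] (f : M →ₗ[Aᵐᵒᵖ] M')
    (y : TensorProduct k M (TensorProduct k A V)) :
    fwd0 k A V M' (LinearMap.rTensor (TensorProduct k A V) (f.restrictScalars k) y) =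
      LinearMap.rTensor V (f.restrictScalars k) (fwd0 k A V M y) := by
  induction y using TensorProduct.induction_on with
  | zero => simp
  | add y₁ y₂ h₁ h₂ => rw [map_add, map_add, h₁, h₂, map_add, map_add]
  | tmul m w =>
      induction w using TensorProduct.induction_on with
      | zero => simp
      | add w₁ w₂ h₁ h₂ =>
          rw [TensorProduct.tmul_add, map_add, map_add, h₁, h₂, map_add, map_add]
      | tmul a v =>
          simp only [LinearMap.rTensor_tmul, fwd0_tmul, LinearMap.coe_restrictScalars,
            map_smul]

lemma phiFwd_nat {M M' : Type*} [AddCommGroup M] [Module k M] [Module Aᵐᵒᵖ M]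
    [IsScalarTower k Aᵐᵒᵖ M] [AddCommGroup M'] [Module k M'] [Module Aᵐᵒᵖ M']
    [IsScalarTower k Aᵐᵒᵖ M'] (f : M →ₗ[Aᵐᵒᵖ] M')
    (x : BalancedTensor k A M (TensorProduct k A V)) :
    phiFwd k A V M' (balancedMap k A (TensorProduct k A V) f x) =
      LinearMap.rTensor V (f.restrictScalars k) (phiFwd k A V M x) := by
  obtain ⟨y, rfl⟩ := Submodule.Quotient.mk_surjective _ x
  rw [balancedMap_mk, phiFwd_mk, phiFwd_mk, fwd0_nat]

lemma phiBwd_tmul {M : Type*} [AddCommGroup M] [Module k M] [Module Aᵐᵒᵖ M]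
    [IsScalarTower k Aᵐᵒᵖ M] (m : M) (v : V) :
    phiBwd k A V M (m ⊗ₜ[k] v) =
      Submodule.Quotient.mk (m ⊗ₜ[k] ((1 : A) ⊗ₜ[k] v)) :=
  rfl

lemma phiBwd_nat {M M' : Type*} [AddCommGroup M] [Module k M] [Module Aᵐᵒᵖ M]
    [IsScalarTower k Aᵐᵒᵖ M] [AddCommGroup M'] [Module k M'] [Module Aᵐᵒᵖ M']
    [IsScalarTower k Aᵐᵒᵖ M'] (f : M →ₗ[Aᵐᵒᵖ] M') (y : TensorProduct k M V) :
    phiBwd k A V M' (LinearMap.rTensor V (f.restrictScalars k) y) =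
      balancedMap k A (TensorProduct k A V) f (phiBwd k A V M y) := by
  induction y using TensorProduct.induction_on with
  | zero => simp
  | add y₁ y₂ h₁ h₂ => simp only [map_add, h₁, h₂]
  | tmul m v => rfl

/-- `A ⊗[k] V` is flat over `A` when `V` is flat over `k`. -/
lemma isFlatOver_tensorProduct [Module.Flat k V] :
    IsFlatOver.{u, v, w} k A (TensorProduct k A V) := by
  intro M₁ M₂ M₃ i1 i2 i3 i4 i5 i6 i7 i8 i9 i10 i11 i12 f g hfg
  have hfg' : Function.Exact (f.restrictScalars k) (g.restrictScalars k) := hfg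
  have hex := Module.Flat.rTensor_exact (M := V) hfg'
  intro x
  constructor
  · intro hx
    have h1 : LinearMap.rTensor V (g.restrictScalars k) (phiFwd k A V M₂ x) = 0 := by
      rw [← phiFwd_nat, hx, map_zero]
    obtain ⟨y, hy⟩ := (hex _).mp h1
    refine ⟨phiBwd k A V M₁ y, ?_⟩
    rw [← phiBwd_nat, hy, phiBwd_phiFwd]
  · rintro ⟨y, rfl⟩
    have hinj : Function.Injective (phiFwd k A V M₃) :=
      Function.LeftInverse.injective (phiBwd_phiFwd k A V)
    apply hinj
    rw [map_zero, phiFwd_nat, phiFwd_nat]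
    exact (hex _).mpr ⟨phiFwd k A V M₁ y, rfl⟩

end TensorFlat

section AveragingSec

variable (k : Type u) [CommRing k] (G : Type v) [Group G] (H : Subgroup G) [Fintype ↥H]
variable (V : Type u) [AddCommGroup V] [Module k V]
  [Module (MonoidAlgebra k ↥H) V] [IsScalarTower k (MonoidAlgebra k ↥H) V]

/-- Right multiplication by `t` as a left-`A`-linear map. -/
noncomputable def mulRightA (t : MonoidAlgebra k G) :
    MonoidAlgebra k G →ₗ[MonoidAlgebra k G] MonoidAlgebra k G where
  toFun x := x * t
  map_add' x y := add_mul x y t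
  map_smul' a x := by simp [smul_eq_mul, mul_assoc]

/-- `v ↦ c • (h⁻¹ • v)` as a `k`-linear map. -/
noncomputable def avgV (c : k) (h : ↥H) : V →ₗ[k] V where
  toFun v := c • ((MonoidAlgebra.single h⁻¹ 1 : MonoidAlgebra k ↥H) • v)
  map_add' v w := by rw [smul_add, smul_add]
  map_smul' r v := by
    dsimp only [RingHom.id_apply]
    rw [smul_comm (MonoidAlgebra.single h⁻¹ (1 : k)) r v, smul_comm c r]

/-- The averaging operator on `k[G] ⊗ V`. -/
noncomputable def avg (c : k) :
    TensorProduct k (MonoidAlgebra k G) V →ₗ[MonoidAlgebra k G]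
      TensorProduct k (MonoidAlgebra k G) V :=
  ∑ h : ↥H, TensorProduct.AlgebraTensorModule.map
    (mulRightA k G (MonoidAlgebra.single ((h : G)) (1 : k))) (avgV k G H V c h)

lemma avg_tmul (c : k) (y : MonoidAlgebra k G) (m : V) :
    avg k G H V c (y ⊗ₜ[k] m) = ∑ h : ↥H,
      (y * MonoidAlgebra.single ((h : G)) (1 : k)) ⊗ₜ[k]
        (c • ((MonoidAlgebra.single h⁻¹ 1 : MonoidAlgebra k ↥H) • m)) := by
  rw [avg, LinearMap.sum_apply]
  exact Finset.sum_congr rfl fun h _ => rfl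

lemma avg_rel (c : k) : indRel k G H V ≤ LinearMap.ker (avg k G H V c) := by
  rw [indRel, Submodule.span_le]
  rintro x ⟨a, y, m, rfl⟩
  rw [SetLike.mem_coe, LinearMap.mem_ker, map_sub, sub_eq_zero]
  induction a using MonoidAlgebra.induction_linear with
  | zero => simp
  | add f g hf hg =>
      rw [map_add, mul_add, TensorProduct.add_tmul, map_add, hf, hg,
        add_smul, TensorProduct.tmul_add, map_add]
  | single s b =>
      have hJ : (MonoidAlgebra.mapDomainRingHom k H.subtype)
          (MonoidAlgebra.single s b) = MonoidAlgebra.single ((s : G)) b := by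
        simp [MonoidAlgebra.mapDomainRingHom, MonoidAlgebra.mapDomain_single]
      rw [hJ, avg_tmul, avg_tmul]
      have hL : ∀ h : ↥H,
          (y * MonoidAlgebra.single ((s : G)) b * MonoidAlgebra.single ((h : G)) 1) ⊗ₜ[k]
              (c • ((MonoidAlgebra.single h⁻¹ 1 : MonoidAlgebra k ↥H) • m))
            = b • ((y * MonoidAlgebra.single (((s * h : ↥H) : G)) 1) ⊗ₜ[k]
              (c • ((MonoidAlgebra.single h⁻¹ 1 : MonoidAlgebra k ↥H) • m))) := by
        intro h
        rw [mul_assoc, MonoidAlgebra.single_mul_single, mul_one,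
          show ((s : G) * (h : G)) = (((s * h : ↥H) : G)) from rfl,
          show (MonoidAlgebra.single (((s * h : ↥H) : G)) b : MonoidAlgebra k G)
            = b • MonoidAlgebra.single (((s * h : ↥H) : G)) 1 by
              rw [MonoidAlgebra.smul_single, smul_eq_mul, mul_one],
          mul_smul_comm, TensorProduct.smul_tmul']
      have hRC : ∀ h : ↥H,
          (y * MonoidAlgebra.single (((Equiv.mulLeft s h : ↥H) : G)) 1) ⊗ₜ[k]
              (c • ((MonoidAlgebra.single (Equiv.mulLeft s h)⁻¹ 1 : MonoidAlgebra k ↥H) •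
                ((MonoidAlgebra.single s b : MonoidAlgebra k ↥H) • m)))
            = b • ((y * MonoidAlgebra.single (((s * h : ↥H) : G)) 1) ⊗ₜ[k]
              (c • ((MonoidAlgebra.single h⁻¹ 1 : MonoidAlgebra k ↥H) • m))) := by
        intro h
        have e2 : (MonoidAlgebra.single (s * h)⁻¹ (1 : k) : MonoidAlgebra k ↥H) •
            ((MonoidAlgebra.single s b : MonoidAlgebra k ↥H) • m)
            = b • ((MonoidAlgebra.single h⁻¹ 1 : MonoidAlgebra k ↥H) • m) := by
          rw [← mul_smul, MonoidAlgebra.single_mul_single, one_mul, mul_inv_rev,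
            inv_mul_cancel_right,
            show (MonoidAlgebra.single h⁻¹ b : MonoidAlgebra k ↥H)
              = b • MonoidAlgebra.single h⁻¹ 1 by
                rw [MonoidAlgebra.smul_single, smul_eq_mul, mul_one],
            smul_assoc]
        rw [show (Equiv.mulLeft s h : ↥H) = s * h from rfl, e2, smul_comm c b,
          TensorProduct.tmul_smul]
      calc (∑ h : ↥H,
              (y * MonoidAlgebra.single ((s : G)) b * MonoidAlgebra.single ((h : G)) 1) ⊗ₜ[k]
                (c • ((MonoidAlgebra.single h⁻¹ 1 : MonoidAlgebra k ↥H) • m)))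
          = ∑ h : ↥H, b • ((y * MonoidAlgebra.single (((s * h : ↥H) : G)) 1) ⊗ₜ[k]
              (c • ((MonoidAlgebra.single h⁻¹ 1 : MonoidAlgebra k ↥H) • m))) :=
            Finset.sum_congr rfl fun h _ => hL h
        _ = ∑ h : ↥H, (y * MonoidAlgebra.single ((h : G)) 1) ⊗ₜ[k]
              (c • ((MonoidAlgebra.single h⁻¹ 1 : MonoidAlgebra k ↥H) •
                ((MonoidAlgebra.single s b : MonoidAlgebra k ↥H) • m))) :=
            Fintype.sum_equiv (Equiv.mulLeft s) _ _ fun h => (hRC h).symm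

lemma avg_sub_self (c : k) (hc : (Fintype.card ↥H : k) * c = 1)
    (x : TensorProduct k (MonoidAlgebra k G) V) :
    avg k G H V c x - x ∈ indRel k G H V := by
  induction x using TensorProduct.induction_on with
  | zero => simp
  | add x y hx hy =>
      have := Submodule.add_mem _ hx hy
      rw [map_add]
      convert this using 1
      abel
  | tmul y m =>
      have key : ∀ h : ↥H,
          (y * MonoidAlgebra.single ((h : G)) 1) ⊗ₜ[k]
              (c • ((MonoidAlgebra.single h⁻¹ 1 : MonoidAlgebra k ↥H) • m))
            - c • (y ⊗ₜ[k] m) ∈ indRel k G H V := by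
        intro h
        have hgen : (y * (MonoidAlgebra.mapDomainRingHom k H.subtype)
              (MonoidAlgebra.single h (1 : k))) ⊗ₜ[k]
              (c • ((MonoidAlgebra.single h⁻¹ 1 : MonoidAlgebra k ↥H) • m))
            - y ⊗ₜ[k] ((MonoidAlgebra.single h (1 : k) : MonoidAlgebra k ↥H) •
              (c • ((MonoidAlgebra.single h⁻¹ 1 : MonoidAlgebra k ↥H) • m)))
            ∈ indRel k G H V := by
          rw [indRel]
          exact Submodule.subset_span
            ⟨(MonoidAlgebra.single h 1 : MonoidAlgebra k ↥H), y,
              c • ((MonoidAlgebra.single h⁻¹ 1 : MonoidAlgebra k ↥H) • m), rfl⟩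
        have hJ : (MonoidAlgebra.mapDomainRingHom k H.subtype)
            (MonoidAlgebra.single h (1 : k)) = MonoidAlgebra.single ((h : G)) 1 := by
          simp [MonoidAlgebra.mapDomainRingHom, MonoidAlgebra.mapDomain_single]
        have hsm : (MonoidAlgebra.single h 1 : MonoidAlgebra k ↥H) •
            (c • ((MonoidAlgebra.single h⁻¹ 1 : MonoidAlgebra k ↥H) • m)) = c • m := by
          rw [smul_comm, ← mul_smul, MonoidAlgebra.single_mul_single, one_mul,
            mul_inv_cancel]
          rw [show MonoidAlgebra.single (1 : ↥H) (1 : k) =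
            (1 : MonoidAlgebra k ↥H) from rfl, one_smul]
        rw [hJ, hsm] at hgen
        rw [← TensorProduct.tmul_smul]
        exact hgen
      have total := Submodule.sum_mem (indRel k G H V)
        (fun h (_ : h ∈ Finset.univ) => key h)
      convert total using 1
      rw [avg_tmul, Finset.sum_sub_distrib]
      congr 1
      rw [Finset.sum_const, Finset.card_univ, ← Nat.cast_smul_eq_nsmul k, smul_smul,
        hc, one_smul]

end AveragingSec

theorem induced_module_of_k_flat_is_flat
    (k : Type u) [CommRing k] (G : Type v) [Group G] (H : Subgroup G) [Fintype ↥H]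
    (hcard : IsUnit ((Fintype.card ↥H : k)))
    (V : Type u) [AddCommGroup V] [Module k V]
    [Module (MonoidAlgebra k ↥H) V] [IsScalarTower k (MonoidAlgebra k ↥H) V]
    [Module.Flat k V] :
    IsFlatOver.{u, max u v, w} k (MonoidAlgebra k G) (IndModule k G H V) := by
  obtain ⟨c, hc⟩ : ∃ c : k, (Fintype.card ↥H : k) * c = 1 :=
    ⟨↑hcard.unit⁻¹, hcard.mul_val_inv⟩
  let i : IndModule k G H V →ₗ[MonoidAlgebra k G]
      TensorProduct k (MonoidAlgebra k G) V :=
    Submodule.liftQ (indRel k G H V) (avg k G H V c) (avg_rel k G H V c)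
  let p : TensorProduct k (MonoidAlgebra k G) V →ₗ[MonoidAlgebra k G]
      IndModule k G H V := (indRel k G H V).mkQ
  have hpi : ∀ x, p (i x) = x := by
    intro x
    obtain ⟨y, rfl⟩ := Submodule.Quotient.mk_surjective _ x
    show Submodule.Quotient.mk (avg k G H V c y) = Submodule.Quotient.mk y
    rw [Submodule.Quotient.eq]
    exact avg_sub_self k G H V c hc y
  exact isFlatOver_of_retract k (MonoidAlgebra k G) i p hpi
    (isFlatOver_tensorProduct k (MonoidAlgebra k G) V)
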